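/- Equivalence of the row-constant forms of the current distribution determinant: for any integer $x$, $t\ge0$, and rates $v_1,\dots,v_N>0$, the $N\times N$ determinant with entries $B_{m,n}=F_{1,n+1}(x+N-m+n-1,t)$ equals the Toeplitz-type determinant with entries $C_{m,n}=F_{1,N+1}(x+N-m+n-1,t)$. -/

import Mathlib

open Finset

/-- The contour-integral function `F_{k,l}(x,t)` of Rákos–Schütz:
`F_{k,l}(x,t) = (2πi)⁻¹ ∮ e^{t/z} z^{x-1} ∏_{i=1}^{l-1}(1 - v_i z)⁻¹ ∏_{i=1}^{k-1}(1 - v_i z) dz`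
along a circle of radius `ε` around the origin.  The rates are `v 1, v 2, …`. -/
noncomputable def F (v : ℕ → ℝ) (ε : ℝ) (k l : ℕ) (x : ℤ) (t : ℝ) : ℂ :=
  (2 * Real.pi * Complex.I)⁻¹ *
    (∮ z in C(0, ε), Complex.exp ((t : ℂ) / z) * z ^ (x - 1) *
      (∏ i ∈ range (l - 1), (1 - (v (i + 1) : ℂ) * z)⁻¹) *
      ∏ i ∈ range (k - 1), (1 - (v (i + 1) : ℂ) * z))

/-!
The integrand of `F_{1,l}` is that of `F_{1,l+1}` times `1 - v_l z`, and multiplying by `z`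
shifts `x` by one; hence the column recursion `F_{1,l}(x) = F_{1,l+1}(x) - v_l F_{1,l+1}(x+1)`.
In both matrices the argument grows by one from each column to the next, so raising the level of
columns `0, …, l-2` from `l` to `l+1` is the column operation `col n ↦ col n - v_l • col (n+1)`,
which preserves the determinant. Doing this for `l = 2, …, N` turns `B` into `C`.
-/

open Metric Set

namespace Matrix

variable {R : Type*} [CommRing R]

theorem det_eq_of_forall_col_eq_add_smul_succ {n : ℕ} {A B : Matrix (Fin (n + 1)) (Fin (n + 1)) R}
    (c : Fin n → R) (A_last : ∀ i, A i (Fin.last n) = B i (Fin.last n))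
    (A_castSucc : ∀ i (j : Fin n), A i j.castSucc = B i j.castSucc + c j * B i j.succ) :
    det A = det B := by
  -- after reversing the column order this is `det_eq_of_forall_col_eq_smul_add_pred` for `B, A`
  have h_rev : (B.submatrix id Fin.revPerm).det = (A.submatrix id Fin.revPerm).det := by
    refine det_eq_of_forall_col_eq_smul_add_pred (fun j => -c j.rev) (fun i => ?_) fun i j => ?_
    · simp [A_last]
    · simp [Fin.rev_succ, A_castSucc, Fin.rev_castSucc]
  rw [det_permute', det_permute'] at h_rev
  exact (((Equiv.Perm.sign Fin.revPerm).isUnit.map (Int.castRingHom R)).mul_left_cancel h_rev).symm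

end Matrix

section ColumnRecursion

variable {R : Type*} [CommRing R] {N : ℕ}

/-- Column `j` has level `max (j + 2) l`: for `l ≤ 2` this is the `B` matrix, for `l = N + 1`
the `C` matrix. -/
def stageMatrix (f : ℕ → ℤ → R) (r : Fin N → ℤ) (l : ℕ) : Matrix (Fin N) (Fin N) R :=
  Matrix.of fun i j => f (max (j + 2) l) (r i + j)

variable {f : ℕ → ℤ → R} {c : ℕ → R}

theorem det_stageMatrix_succ {n : ℕ} (r : Fin (n + 1) → ℤ) {l : ℕ} (hl : l ≤ n + 1)
    (hf : ∀ y, f l y = f (l + 1) y - c l * f (l + 1) (y + 1)) :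
    (stageMatrix f r l).det = (stageMatrix f r (l + 1)).det := by
  refine Matrix.det_eq_of_forall_col_eq_add_smul_succ
    (fun j => if (j : ℕ) + 2 ≤ l then -c l else 0) (fun i => ?_) fun i j => ?_
  · simp only [stageMatrix, Matrix.of_apply, Fin.val_last]
    rw [max_eq_left (by omega), max_eq_left (by omega)]
  · simp only [stageMatrix, Matrix.of_apply, Fin.val_castSucc, Fin.val_succ]
    split_ifs with hj
    · rw [max_eq_right hj, max_eq_right (by omega), max_eq_right (by omega), hf]
      push_cast
      rw [add_assoc]
      ring
    · rw [max_eq_left (by omega), max_eq_left (by omega)]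
      ring

theorem det_of_column_recursion (r : Fin N → ℤ)
    (hf : ∀ l, 2 ≤ l → l ≤ N → ∀ y, f l y = f (l + 1) y - c l * f (l + 1) (y + 1)) :
    (Matrix.of fun i j : Fin N => f (j + 2) (r i + j)).det =
      (Matrix.of fun i j : Fin N => f (N + 1) (r i + j)).det := by
  rcases N with _ | n
  · simp
  have h_chain : ∀ l, 2 ≤ l → l ≤ n + 2 → (stageMatrix f r 2).det = (stageMatrix f r l).det := by
    refine Nat.le_induction (fun _ => rfl) fun l h2l ih hl => ?_
    rw [ih (by omega)]
    exact det_stageMatrix_succ r (by omega) (hf l h2l (by omega))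
  convert h_chain (n + 2) (by omega) le_rfl using 2 <;> ext i j
  · simp [stageMatrix]
  · simp only [stageMatrix, Matrix.of_apply]
    rw [max_eq_right (by omega)]

end ColumnRecursion

section FOne

variable (v : ℕ → ℝ) (t : ℝ)

noncomputable def FOneIntegrand (l : ℕ) (x : ℤ) (z : ℂ) : ℂ :=
  Complex.exp ((t : ℂ) / z) * z ^ (x - 1) * ∏ i ∈ range (l - 1), (1 - (v (i + 1) : ℂ) * z)⁻¹

theorem F_one_eq_circleIntegral (ε : ℝ) (l : ℕ) (x : ℤ) :
    F v ε 1 l x t = (2 * Real.pi * Complex.I)⁻¹ * ∮ z in C(0, ε), FOneIntegrand v t l x z := by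
  simp [F, FOneIntegrand]

theorem FOneIntegrand_eq_sub {l : ℕ} (hl : 1 ≤ l) (x : ℤ) {z : ℂ} (hz : z ≠ 0)
    (hlz : 1 - (v l : ℂ) * z ≠ 0) :
    FOneIntegrand v t l x z =
      FOneIntegrand v t (l + 1) x z - v l * FOneIntegrand v t (l + 1) (x + 1) z := by
  obtain ⟨k, rfl⟩ := Nat.exists_eq_add_of_le' hl
  have hinv : (1 - (v (k + 1) : ℂ) * z)⁻¹ * (1 - (v (k + 1) : ℂ) * z) = 1 := inv_mul_cancel₀ hlz
  simp only [FOneIntegrand, Nat.add_sub_cancel, prod_range_succ,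
    show x + 1 - 1 = x - 1 + 1 by ring, zpow_add_one₀ hz]
  linear_combination (-(Complex.exp (t / z) * z ^ (x - 1) *
    ∏ i ∈ range k, (1 - (v (i + 1) : ℂ) * z)⁻¹)) * hinv

theorem one_sub_mul_ne_zero_of_mem_sphere {a ε : ℝ} (haε : |a| * ε < 1) {z : ℂ}
    (hz : z ∈ sphere 0 ε) : 1 - (a : ℂ) * z ≠ 0 := by
  intro h
  have := congrArg (‖·‖) (sub_eq_zero.mp h)
  simp [mem_sphere_zero_iff_norm.mp hz] at this
  exact haε.ne this.symm

variable {v}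

theorem continuousOn_FOneIntegrand {ε : ℝ} (hε : ε ≠ 0) (hvε : ∀ i, |v i| * ε < 1)
    (l : ℕ) (x : ℤ) : ContinuousOn (FOneIntegrand v t l x) (sphere 0 ε) := by
  have h0 : ∀ z ∈ sphere (0 : ℂ) ε, z ≠ 0 := fun z hz => ne_zero_of_mem_sphere hε ⟨z, hz⟩
  refine ((continuousOn_const.div continuousOn_id h0).cexp.mul
    (continuousOn_id.zpow₀ _ fun z hz => .inl (h0 z hz))).mul
    (continuousOn_finsetProd _ fun i _ => ?_)
  exact (continuousOn_const.sub (continuousOn_const.mul continuousOn_id)).inv₀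
    fun z hz => one_sub_mul_ne_zero_of_mem_sphere (hvε _) hz

theorem F_one_eq_sub_mul_succ {ε : ℝ} (hε : 0 < ε) (hvε : ∀ i, |v i| * ε < 1) {l : ℕ}
    (hl : 1 ≤ l) (x : ℤ) :
    F v ε 1 l x t = F v ε 1 (l + 1) x t - v l * F v ε 1 (l + 1) (x + 1) t := by
  have hcont (y : ℤ) := continuousOn_FOneIntegrand t hε.ne' hvε (l + 1) y
  have h_int : CircleIntegrable (fun z => v l * FOneIntegrand v t (l + 1) (x + 1) z) 0 ε :=
    (continuousOn_const.mul (hcont _)).circleIntegrable hε.le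
  have h_congr : EqOn (FOneIntegrand v t l x)
      (fun z => FOneIntegrand v t (l + 1) x z - v l * FOneIntegrand v t (l + 1) (x + 1) z)
      (sphere 0 ε) := fun z hz =>
    FOneIntegrand_eq_sub v t hl x (ne_zero_of_mem_sphere hε.ne' ⟨z, hz⟩)
      (one_sub_mul_ne_zero_of_mem_sphere (hvε l) hz)
  simp only [F_one_eq_circleIntegral]
  rw [circleIntegral.integral_congr hε.le h_congr,
    circleIntegral.integral_sub ((hcont x).circleIntegrable hε.le) h_int,
    circleIntegral.integral_const_mul]
  ring

end FOne

theorem determinant_form_B_eq_C_general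
    (N : ℕ) (v : ℕ → ℝ) (vmax : ℝ) (hv : ∀ i, 0 < v i) (hvm : ∀ i, v i ≤ vmax)
    (ε : ℝ) (hε : 0 < ε) (hεm : ε < 1 / vmax)
    (x : ℤ) (t : ℝ) :
    Matrix.det (Matrix.of fun m n : Fin N =>
        F v ε 1 ((n : ℕ) + 2) (x + N - (m : ℤ) + (n : ℤ) - 1) t) =
      Matrix.det (Matrix.of fun m n : Fin N =>
        F v ε 1 (N + 1) (x + N - (m : ℤ) + (n : ℤ) - 1) t) := by
  have hvε : ∀ i, |v i| * ε < 1 := fun i => by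
    have hvmax : 0 < vmax := (hv 0).trans_le (hvm 0)
    rw [abs_of_pos (hv i)]
    calc v i * ε ≤ vmax * ε := by gcongr; exact hvm i
      _ < 1 := by rwa [lt_div_iff₀ hvmax, mul_comm] at hεm
  have h := det_of_column_recursion (f := fun l y => F v ε 1 l y t) (c := fun l => (v l : ℂ))
    (fun m : Fin N => x + N - m - 1) fun l hl _ y => F_one_eq_sub_mul_succ t hε hvε (by omega) y
  convert h using 4 <;> ring_nf

theorem determinant_form_B_eq_C
    (N : ℕ) (v : ℕ → ℝ) (vmax : ℝ) (hv : ∀ i, 0 < v i) (hvm : ∀ i, v i ≤ vmax)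
    (ε : ℝ) (hε : 0 < ε) (hεm : ε < 1 / vmax)
    (x : ℤ) (t : ℝ) (ht : 0 ≤ t) :
    Matrix.det (Matrix.of fun m n : Fin N =>
        F v ε 1 ((n : ℕ) + 2) (x + N - (m : ℤ) + (n : ℤ) - 1) t) =
      Matrix.det (Matrix.of fun m n : Fin N =>
        F v ε 1 (N + 1) (x + N - (m : ℤ) + (n : ℤ) - 1) t) :=
  determinant_form_B_eq_C_general N v vmax hv hvm ε hε hεm x t
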